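/- arXiv:1002.4640 — 2 statements merged into one kernel-verified Lean document; each statement's English description precedes it below -/
import Mathlib

section
/- Let φ : ℍ → ℍ be analytic with nontangential boundary value function φ* on ℝ satisfying Im(φ*(x)) > 0 for almost every x ∈ ℝ. Then for every f ∈ H²(ℍ), the boundary value function of C_φ f is given by (C_φ f)*(x) = (1/(2πi)) ∫_{-∞}^{∞} f*(ξ)/(ξ - φ*(x)) dξ for almost every x ∈ ℝ. -/
/-!
The Cauchy integral `w ↦ ∫ f*(ξ) / (ξ - w) dξ` of an `L²` function is continuous off the real
axis: for `z` within `|Im w| / 2` of `w` one has `|ξ - w| ≤ 2 |ξ - z|`, so the integrands are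
dominated by `2 |f*(ξ)| / |ξ - w|`, which is integrable as a product of two `L²` functions.
Since `φ` maps `ℍ` into `ℍ`, `f (φ (x + it))` is the Cauchy integral at `φ (x + it) → φ*(x)`,
and `φ*(x) ∈ ℍ` for almost every `x`.
-/

open Complex MeasureTheory Filter Set Topology

theorem integrable_inv_sub_sq_add_sq (a : ℝ) {b : ℝ} (hb : b ≠ 0) :
    Integrable (fun x : ℝ => ((x - a) ^ 2 + b ^ 2)⁻¹) := by
  have hscaled : Integrable (fun x : ℝ => (b ^ 2)⁻¹ * (1 + (x / b) ^ 2)⁻¹) :=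
    (integrable_inv_one_add_sq.comp_div hb).const_mul _
  have hcentered : Integrable (fun x : ℝ => (x ^ 2 + b ^ 2)⁻¹) := by
    refine hscaled.congr (Eventually.of_forall fun x => ?_)
    field_simp
    ring
  exact hcentered.comp_sub_right a

theorem abs_im_le_norm_ofReal_sub (ξ : ℝ) (w : ℂ) : |w.im| ≤ ‖(ξ : ℂ) - w‖ := by
  simpa using abs_im_le_norm ((ξ : ℂ) - w)

theorem ofReal_sub_ne_zero (ξ : ℝ) {w : ℂ} (hw : w.im ≠ 0) : (ξ : ℂ) - w ≠ 0 :=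
  norm_pos_iff.mp ((abs_pos.mpr hw).trans_le (abs_im_le_norm_ofReal_sub ξ w))

theorem memLp_two_inv_norm_ofReal_sub {w : ℂ} (hw : w.im ≠ 0) :
    MemLp (fun ξ : ℝ => ‖(ξ : ℂ) - w‖⁻¹) 2 volume := by
  have hcont : Continuous (fun ξ : ℝ => ‖(ξ : ℂ) - w‖⁻¹) :=
    (continuous_ofReal.sub continuous_const).norm.inv₀ fun ξ =>
      norm_ne_zero_iff.mpr (ofReal_sub_ne_zero ξ hw)
  rw [memLp_two_iff_integrable_sq hcont.aestronglyMeasurable]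
  refine (integrable_inv_sub_sq_add_sq w.re hw).congr (Eventually.of_forall fun ξ => ?_)
  simp only [inv_pow, Complex.sq_norm, Complex.normSq_apply, sub_re, ofReal_re, sub_im, ofReal_im,
    zero_sub, neg_mul_neg]
  ring

theorem norm_ofReal_sub_le_two_mul {w z : ℂ} (hz : ‖z - w‖ ≤ |w.im| / 2) (ξ : ℝ) :
    ‖(ξ : ℂ) - w‖ ≤ 2 * ‖(ξ : ℂ) - z‖ := by
  have htri : ‖(ξ : ℂ) - w‖ ≤ ‖(ξ : ℂ) - z‖ + ‖z - w‖ := norm_sub_le_norm_sub_add_norm_sub _ _ _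
  linarith [abs_im_le_norm_ofReal_sub ξ w]

theorem continuousAt_integral_div_ofReal_sub {g : ℝ → ℂ} (hg : MemLp g 2 volume) {w : ℂ}
    (hw : w.im ≠ 0) : ContinuousAt (fun z : ℂ => ∫ ξ : ℝ, g ξ / ((ξ : ℂ) - z)) w := by
  have hnear : ∀ᶠ z in 𝓝 w, ‖z - w‖ ≤ |w.im| / 2 := by
    filter_upwards [Metric.closedBall_mem_nhds w (half_pos (abs_pos.mpr hw))] with z hz
    rwa [Metric.mem_closedBall, dist_eq_norm] at hz
  refine continuousAt_of_dominated (bound := fun ξ => 2 * (‖g ξ‖ * ‖(ξ : ℂ) - w‖⁻¹)) ?_ ?_ ?_ ?_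
  · exact Eventually.of_forall fun z =>
      hg.1.div₀ (continuous_ofReal.sub continuous_const).aestronglyMeasurable
  · filter_upwards [hnear] with z hz
    refine Eventually.of_forall fun ξ => ?_
    have hw0 : 0 < ‖(ξ : ℂ) - w‖ := norm_pos_iff.mpr (ofReal_sub_ne_zero ξ hw)
    calc ‖g ξ / ((ξ : ℂ) - z)‖ = 2 * ‖g ξ‖ / (2 * ‖(ξ : ℂ) - z‖) := by
          rw [norm_div, mul_div_mul_left _ _ two_ne_zero]
      _ ≤ 2 * ‖g ξ‖ / ‖(ξ : ℂ) - w‖ := by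
          gcongr
          exact norm_ofReal_sub_le_two_mul hz ξ
      _ = 2 * (‖g ξ‖ * ‖(ξ : ℂ) - w‖⁻¹) := by ring
  · exact (hg.norm.integrable_mul (memLp_two_inv_norm_ofReal_sub hw)).const_mul 2
  · exact Eventually.of_forall fun ξ =>
      continuousAt_const.div (continuousAt_const.sub continuousAt_id) (ofReal_sub_ne_zero ξ hw)

theorem stmt3_general (φ : ℂ → ℂ)
    (hφmaps : ∀ z : ℂ, 0 < z.im → 0 < (φ z).im)
    (φs : ℝ → ℂ)
    (hφs : ∀ᵐ x : ℝ, Tendsto (fun t : ℝ => φ ((x : ℂ) + (t : ℂ) * Complex.I))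
        (nhdsWithin 0 (Set.Ioi 0)) (nhds (φs x)) ∧ 0 < (φs x).im)
    (f : ℂ → ℂ)
    (fs : ℝ → ℂ) (hfs : MeasureTheory.MemLp fs 2 (volume : Measure ℝ))
    (hCauchy : ∀ z : ℂ, 0 < z.im →
      f z = (1 / (2 * (Real.pi : ℂ) * Complex.I)) * ∫ x : ℝ, fs x / ((x : ℂ) - z)) :
    ∀ᵐ x : ℝ, Tendsto (fun t : ℝ => f (φ ((x : ℂ) + (t : ℂ) * Complex.I)))
      (nhdsWithin 0 (Set.Ioi 0))
      (nhds ((1 / (2 * (Real.pi : ℂ) * Complex.I)) * ∫ ξ : ℝ, fs ξ / ((ξ : ℂ) - φs x))) := by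
  filter_upwards [hφs] with x ⟨hφx, hφx_im⟩
  have hcauchy_tendsto :=
    ((continuousAt_integral_div_ofReal_sub hfs hφx_im.ne').tendsto.comp hφx).const_mul
      (1 / (2 * (Real.pi : ℂ) * Complex.I))
  refine hcauchy_tendsto.congr' ?_
  filter_upwards [self_mem_nhdsWithin] with t (ht : 0 < t)
  exact (hCauchy _ (hφmaps _ (by simpa using ht))).symm

/-- If `φ` is an analytic self-map of the upper half-plane whose
nontangential (here: vertical) boundary values `φ*` satisfy `Im φ*(x) > 0` a.e., and
`f ∈ H²(ℍ)` (analytic, with boundary values `f* ∈ L²(ℝ)` reproducing `f` by the Cauchy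
integral), then a.e. `x` the boundary value of `C_φ f` is
`(1/(2πi)) ∫ f*(ξ)/(ξ - φ*(x)) dξ`. -/
theorem stmt3 (φ : ℂ → ℂ)
    (hφa : DifferentiableOn ℂ φ {z : ℂ | 0 < z.im})
    (hφmaps : ∀ z : ℂ, 0 < z.im → 0 < (φ z).im)
    (φs : ℝ → ℂ)
    (hφs : ∀ᵐ x : ℝ, Tendsto (fun t : ℝ => φ ((x : ℂ) + (t : ℂ) * Complex.I))
        (nhdsWithin 0 (Set.Ioi 0)) (nhds (φs x)) ∧ 0 < (φs x).im)
    (f : ℂ → ℂ) (hfa : DifferentiableOn ℂ f {z : ℂ | 0 < z.im})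
    (fs : ℝ → ℂ) (hfs : MeasureTheory.MemLp fs 2 (volume : Measure ℝ))
    (hCauchy : ∀ z : ℂ, 0 < z.im →
      f z = (1 / (2 * (Real.pi : ℂ) * Complex.I)) * ∫ x : ℝ, fs x / ((x : ℂ) - z)) :
    ∀ᵐ x : ℝ, Tendsto (fun t : ℝ => f (φ ((x : ℂ) + (t : ℂ) * Complex.I)))
      (nhdsWithin 0 (Set.Ioi 0))
      (nhds ((1 / (2 * (Real.pi : ℂ) * Complex.I)) * ∫ ξ : ℝ, fs ξ / ((ξ : ℂ) - φs x))) :=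
  stmt3_general φ hφmaps φs hφs f fs hfs hCauchy
end

section
/- Let a ∈ QC(ℝ) and ϑ ∈ C([0,∞]). Then the commutator [T_a, D_ϑ] = T_a D_ϑ − D_ϑ T_a is a compact operator on H²(ℍ). -/
/-!
Conjugated by the Fourier transform, the translation by `-s` becomes multiplication by
`e^{isx}`, so the Fourier multiplier with symbol `1_{[s,∞)}` is `e_s P e_{-s}`. As `e_{±s}`
commute with `M_a`, its commutator with `M_a` is `e_s [M_a, P] e_{-s}`, which is compact.
Operators with compact commutator with a fixed operator form a norm-closed algebra, and on
`[0, ∞)` the symbol `ϑ` is a uniform limit of combinations of the `1_{[s,∞)}`. Since `P` commutes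
with every Fourier multiplier `B` and `P² = P`, `[P M_a P, P B P] = P [M_a, B] P`, and the
compactness passes to the limit `P D P`.
-/

open Complex MeasureTheory Set Filter

noncomputable section

/-- The space `L²(ℝ)`; the Hardy space `H²(ℍ)` is the range of the Riesz projection
`P = F⁻¹ M_{χ_{[0,∞)}} F` in it. -/
abbrev L2R := Lp ℂ 2 (volume : Measure ℝ)

/-- `F` is the Fourier transform on `L²(ℝ)`, pinned down by its usual integral formula
on integrable representatives. -/
def IsFourierL2 (F : L2R ≃ₗᵢ[ℂ] L2R) : Prop :=
  ∀ f : L2R, Integrable (f : ℝ → ℂ) volume →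
    (F f : ℝ → ℂ) =ᵐ[volume]
      fun t => (1 / Real.sqrt (2 * Real.pi) : ℝ) •
        ∫ x : ℝ, Complex.exp (-Complex.I * (t : ℂ) * (x : ℂ)) * f x

open scoped ENNReal NNReal Topology

section MulOperator

variable {α : Type*} [MeasurableSpace α] {μ : Measure α} {p : ℝ≥0∞} [Fact (1 ≤ p)]

def IsMulOperator (T : Lp ℂ p μ →L[ℂ] Lp ℂ p μ) (g : α → ℂ) : Prop :=
  ∀ f : Lp ℂ p μ, (T f : α → ℂ) =ᵐ[μ] fun x => g x * f x

namespace IsMulOperator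

variable {T S : Lp ℂ p μ →L[ℂ] Lp ℂ p μ} {g h : α → ℂ}

theorem ext (hT : IsMulOperator T g) (hS : IsMulOperator S g) : T = S := by
  ext1 f
  exact Lp.ext ((hT f).trans (hS f).symm)

theorem one : IsMulOperator (1 : Lp ℂ p μ →L[ℂ] Lp ℂ p μ) 1 := fun f => by
  simp

theorem mul (hT : IsMulOperator T g) (hS : IsMulOperator S h) : IsMulOperator (T * S) (g * h) :=
  fun f => by
    filter_upwards [hT (S f), hS f] with x hTx hSx
    simp [hTx, hSx, mul_assoc]

theorem commute (hT : IsMulOperator T g) (hS : IsMulOperator S h) : Commute T S :=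
  (hT.mul hS).ext (mul_comm g h ▸ hS.mul hT)

theorem add (hT : IsMulOperator T g) (hS : IsMulOperator S h) : IsMulOperator (T + S) (g + h) :=
  fun f => by
    filter_upwards [hT f, hS f, Lp.coeFn_add (T f) (S f)] with x hTx hSx hx
    rw [add_apply, hx, Pi.add_apply, hTx, hSx, Pi.add_apply, add_mul]

theorem sub (hT : IsMulOperator T g) (hS : IsMulOperator S h) : IsMulOperator (T - S) (g - h) :=
  fun f => by
    filter_upwards [hT f, hS f, Lp.coeFn_sub (T f) (S f)] with x hTx hSx hx
    rw [sub_apply, hx, Pi.sub_apply, hTx, hSx, Pi.sub_apply, sub_mul]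

theorem smul (c : ℂ) (hT : IsMulOperator T g) : IsMulOperator (c • T) (c • g) :=
  fun f => by
    filter_upwards [hT f, Lp.coeFn_smul c (T f)] with x hTx hx
    simp [hx, hTx, mul_assoc]

theorem sum {ι : Type*} (s : Finset ι) {T : ι → Lp ℂ p μ →L[ℂ] Lp ℂ p μ} {g : ι → α → ℂ}
    (hT : ∀ i ∈ s, IsMulOperator (T i) (g i)) : IsMulOperator (∑ i ∈ s, T i) (∑ i ∈ s, g i) := by
  classical
  induction s using Finset.induction_on with
  | empty =>
    intro f
    simp only [Finset.sum_empty, zero_apply, Pi.zero_apply, zero_mul]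
    exact Lp.coeFn_zero ℂ p μ
  | insert i s hi ih =>
    rw [Finset.sum_insert hi, Finset.sum_insert hi]
    exact (hT i (Finset.mem_insert_self i s)).add
      (ih fun j hj => hT j (Finset.mem_insert_of_mem hj))

theorem norm_le (hT : IsMulOperator T g) {C : ℝ} (hC : 0 ≤ C) (hg : ∀ᵐ x ∂μ, ‖g x‖ ≤ C) :
    ‖T‖ ≤ C := by
  refine T.opNorm_le_bound hC fun f => Lp.norm_le_mul_norm_of_ae_le_mul ?_
  filter_upwards [hT f, hg] with x hx hgx
  rw [hx, norm_mul]
  exact mul_le_mul_of_nonneg_right hgx (norm_nonneg _)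

end IsMulOperator

theorem MeasureTheory.MemLp.exists_isMulOperator {g : α → ℂ} (hg : MemLp g ∞ μ) :
    ∃ T : Lp ℂ p μ →L[ℂ] Lp ℂ p μ, IsMulOperator T g := by
  refine ⟨(ContinuousLinearMap.mul ℂ ℂ).holderL μ ∞ p p (hg.toLp g), fun f => ?_⟩
  filter_upwards [(ContinuousLinearMap.mul ℂ ℂ).coeFn_holder (r := p) (hg.toLp g) f,
    hg.coeFn_toLp] with x hx hgx
  simp [hx, hgx]

end MulOperator

section Translation

variable {p : ℝ≥0∞} [Fact (1 ≤ p)]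

def MeasureTheory.Lp.translate (s : ℝ) :
    Lp ℂ p (volume : Measure ℝ) →L[ℂ] Lp ℂ p (volume : Measure ℝ) :=
  (Lp.compMeasurePreservingₗᵢ ℂ (· + s)
    (measurePreserving_add_right volume s)).toContinuousLinearMap

theorem MeasureTheory.Lp.coeFn_translate (s : ℝ) (f : Lp ℂ p (volume : Measure ℝ)) :
    (Lp.translate s f : ℝ → ℂ) =ᵐ[volume] fun x => f (x + s) :=
  Lp.coeFn_compMeasurePreserving f _

theorem IsMulOperator.translate_conj {T : Lp ℂ p (volume : Measure ℝ) →L[ℂ] Lp ℂ p volume}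
    {g : ℝ → ℂ} (hT : IsMulOperator T g) (s : ℝ) :
    IsMulOperator (Lp.translate (-s) * T * Lp.translate s) fun x => g (x - s) := fun f => by
  have hshift := (measurePreserving_add_right volume (-s)).quasiMeasurePreserving
  filter_upwards [Lp.coeFn_translate (-s) (T (Lp.translate s f)),
    hshift.ae_eq (hT (Lp.translate s f)), hshift.ae_eq (Lp.coeFn_translate s f)] with x h1 h2 h3
  simp only [Function.comp_apply, neg_add_cancel_right] at h2 h3
  rw [mul_apply_eq_comp, mul_apply_eq_comp, h1, h2, h3, sub_eq_add_neg]

end Translation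

theorem MeasureTheory.Lp.ext_clm_of_integrable {α 𝕜 E G : Type*} [MeasurableSpace α]
    {μ : Measure α} [NontriviallyNormedField 𝕜] [NormedAddCommGroup E] [NormedSpace 𝕜 E]
    [TopologicalSpace G] [T2Space G] [AddCommGroup G] [Module 𝕜 G] {p : ℝ≥0∞} [Fact (1 ≤ p)]
    (hp : p ≠ ∞) {T₁ T₂ : Lp E p μ →L[𝕜] G}
    (h : ∀ f : Lp E p μ, Integrable (f : α → E) μ → T₁ f = T₂ f) : T₁ = T₂ := by
  ext f
  induction f using Lp.induction hp with
  | indicatorConst c hs hμs =>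
    exact h _ (integrable_indicatorConstLp hs hμs.ne c)
  | add hf hg _ hf' hg' => rw [map_add, map_add, hf', hg']
  | isClosed => exact isClosed_eq T₁.continuous T₂.continuous

theorem IsFourierL2.isMulOperator_conj_translate {F : L2R ≃ₗᵢ[ℂ] L2R} (hF : IsFourierL2 F)
    (s : ℝ) :
    IsMulOperator (F.symm.toContinuousLinearEquiv.conjContinuousAlgEquiv (Lp.translate (-s)))
      fun x : ℝ => exp (I * s * x) := by
  have hmod_norm (x : ℝ) : ‖exp (I * s * x)‖ = 1 := by
    rw [show I * s * x = ((s * x : ℝ) : ℂ) * I by push_cast; ring, norm_exp_ofReal_mul_I]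
  have hmod_meas : AEStronglyMeasurable (fun x : ℝ => exp (I * s * x)) volume := by fun_prop
  obtain ⟨E, hE⟩ := (memLp_top_of_bound hmod_meas 1
    (.of_forall fun x => (hmod_norm x).le)).exists_isMulOperator (p := 2)
  -- It is enough to check this on integrable `f`, where `F` is given by its integral.
  suffices key : Lp.translate (-s) ∘L F.toContinuousLinearEquiv.toContinuousLinearMap =
      F.toContinuousLinearEquiv.toContinuousLinearMap ∘L E by
    intro f
    have hkey := congr($key f)
    simp only [ContinuousLinearMap.comp_apply, ContinuousLinearEquiv.coe_coe,
      LinearIsometryEquiv.coe_toContinuousLinearEquiv] at hkey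
    simpa [hkey] using hE f
  refine Lp.ext_clm_of_integrable (by norm_num) fun f hf => ?_
  have hEf : Integrable (E f : ℝ → ℂ) volume :=
    (hf.bdd_mul hmod_meas (.of_forall fun x => (hmod_norm x).le)).congr (hE f).symm
  have hshift := (measurePreserving_add_right volume (-s)).quasiMeasurePreserving
  refine Lp.ext ?_
  filter_upwards [Lp.coeFn_translate (-s) (F f), hshift.ae_eq (hF f hf), hF (E f) hEf]
    with t hVt hFt hFEt
  simp only [ContinuousLinearMap.comp_apply, ContinuousLinearEquiv.coe_coe,
    LinearIsometryEquiv.coe_toContinuousLinearEquiv, Function.comp_apply] at hVt hFt hFEt ⊢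
  rw [hVt, hFt, hFEt]
  congr 1
  refine integral_congr_ae ?_
  filter_upwards [hE f] with x hx
  rw [hx, ← mul_assoc, ← Complex.exp_add]
  congr 2
  push_cast
  ring

section CompactCommutant

variable {𝕜 E : Type*} [NontriviallyNormedField 𝕜] [NormedAddCommGroup E] [NormedSpace 𝕜 E]

def compactCommutant (A : E →L[𝕜] E) : Subalgebra 𝕜 (E →L[𝕜] E) where
  carrier := {T | IsCompactOperator ⇑(A * T - T * A)}
  mul_mem' {S T} hS hT := by
    have hST : A * (S * T) - S * T * A = (A * S - S * A) * T + S * (A * T - T * A) := by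
      noncomm_ring
    simp only [Set.mem_ofPred_eq, hST, FunLike.coe_add, FunLike.coe_mul_eq_comp]
    exact (hS.comp_clm T).add (hT.clm_comp S)
  add_mem' {S T} hS hT := by
    have hST : A * (S + T) - (S + T) * A = (A * S - S * A) + (A * T - T * A) := by
      noncomm_ring
    simp only [Set.mem_ofPred_eq, hST, FunLike.coe_add]
    exact hS.add hT
  algebraMap_mem' c := by
    simp only [Set.mem_ofPred_eq, ← Algebra.commutes c A, sub_self]
    exact isCompactOperator_zero

theorem mem_compactCommutant {A T : E →L[𝕜] E} :
    T ∈ compactCommutant A ↔ IsCompactOperator ⇑(A * T - T * A) :=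
  Iff.rfl

theorem mem_compactCommutant_comm {A T : E →L[𝕜] E} :
    T ∈ compactCommutant A ↔ A ∈ compactCommutant T := by
  rw [mem_compactCommutant, mem_compactCommutant, ← neg_sub, FunLike.coe_neg]
  exact ⟨fun h => by simpa using h.neg, IsCompactOperator.neg⟩

theorem Commute.mem_compactCommutant {A T : E →L[𝕜] E} (h : Commute A T) :
    T ∈ compactCommutant A := by
  rw [_root_.mem_compactCommutant, h.eq, sub_self]
  exact isCompactOperator_zero

theorem isClosed_compactCommutant [CompleteSpace E] (A : E →L[𝕜] E) :
    IsClosed (compactCommutant A : Set (E →L[𝕜] E)) :=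
  isClosed_setOfPred_isCompactOperator.preimage
    ((continuous_const.mul continuous_id).sub (continuous_id.mul continuous_const))

theorem mul_mul_mem_compactCommutant_mul_mul {A B P : E →L[𝕜] E} (hP : P * P = P)
    (hPB : Commute P B) (hB : B ∈ compactCommutant A) :
    P * B * P ∈ compactCommutant (P * A * P) := by
  have hPBP : P * B * P = P * B := by rw [mul_assoc, ← hPB.eq, ← mul_assoc, hP]
  have hleft : P * A * P * (P * B * P) = P * A * B * P := by
    rw [hPBP, show P * A * P * (P * B) = P * A * (P * P) * B by noncomm_ring, hP,
      mul_assoc (P * A), hPB.eq, ← mul_assoc]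
  have hright : P * B * P * (P * A * P) = P * B * A * P := by
    rw [hPBP, hPB.eq, show B * P * (P * A * P) = B * (P * P) * A * P by noncomm_ring, hP,
      ← hPB.eq]
  have hcomm : P * A * P * (P * B * P) - P * B * P * (P * A * P) = P * (A * B - B * A) * P := by
    rw [hleft, hright]; noncomm_ring
  rw [mem_compactCommutant, hcomm, FunLike.coe_mul_eq_comp, FunLike.coe_mul_eq_comp]
  exact (hB.comp_clm P).clm_comp P

end CompactCommutant

theorem sum_sub_mul_indicator_eq {R : Type*} [Ring R] (g : ℕ → R) (N : ℕ) {h x : ℝ} (hh : 0 < h)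
    (hx : 0 ≤ x) :
    g 0 + ∑ k ∈ Finset.range N,
        (g (k + 1) - g k) * (Ici (0 : ℝ)).indicator (fun _ => 1) (x - (k + 1) * h) =
      g (min N ⌊x / h⌋₊) := by
  have hind (k : ℕ) : (Ici (0 : ℝ)).indicator (fun _ => (1 : R)) (x - (k + 1) * h) =
      if k < ⌊x / h⌋₊ then 1 else 0 := by
    have hiff : 0 ≤ x - (k + 1) * h ↔ k < ⌊x / h⌋₊ := by
      rw [sub_nonneg, ← Nat.add_one_le_iff, Nat.le_floor_iff (div_nonneg hx hh.le),
        le_div_iff₀ hh]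
      push_cast
      rfl
    simp only [indicator, mem_Ici, hiff]
  simp only [hind, mul_ite, mul_one, mul_zero]
  have hrange : (Finset.range N).filter (· < ⌊x / h⌋₊) = Finset.range (min N ⌊x / h⌋₊) := by
    ext k; simp only [Finset.mem_filter, Finset.mem_range]; omega
  rw [Finset.sum_ite, Finset.sum_const_zero, add_zero, hrange, Finset.sum_range_sub,
    add_sub_cancel]

theorem exists_sum_indicator_approx {ϑ : ℝ → ℂ} (hϑc : ContinuousOn ϑ (Ici 0)) {L : ℂ}
    (hϑlim : Tendsto ϑ atTop (𝓝 L)) {ε : ℝ} (hε : 0 < ε) :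
    ∃ (c : ℂ) (N : ℕ) (s : ℕ → ℝ) (b : ℕ → ℂ), ∀ x, 0 ≤ x →
      ‖ϑ x - (c + ∑ k ∈ Finset.range N,
        b k * (Ici (0 : ℝ)).indicator (fun _ => 1) (x - s k))‖ ≤ ε := by
  obtain ⟨R₀, hR₀⟩ := eventually_atTop.mp (hϑlim.eventually (Metric.closedBall_mem_nhds L hε))
  set R := max R₀ 1
  have hR : 0 < R := lt_max_of_lt_right one_pos
  obtain ⟨δ, hδ, hϑδ⟩ := Metric.uniformContinuousOn_iff.mp
    ((isCompact_Icc (a := 0) (b := R)).uniformContinuousOn_of_continuous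
      (hϑc.mono Icc_subset_Ici_self)) ε hε
  obtain ⟨N, hN⟩ := exists_nat_gt (R / δ)
  have hN0 : (0 : ℝ) < N := (div_pos hR hδ).trans hN
  set h := R / N
  have hh : 0 < h := div_pos hR hN0
  have hhδ : h < δ := by rw [div_lt_iff₀ hN0, mul_comm]; rwa [div_lt_iff₀ hδ] at hN
  have hNh : N * h = R := mul_div_cancel₀ R hN0.ne'
  -- Samples of `ϑ` on the grid `hℕ`, replaced by `L` from `R = N h` on; by
  -- `sum_sub_mul_indicator_eq` the step function takes at `x` the sample at the grid point below.
  set g : ℕ → ℂ := fun k => if k < N then ϑ (k * h) else L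
  refine ⟨g 0, N, fun k => (k + 1) * h, fun k => g (k + 1) - g k, fun x hx => ?_⟩
  rw [sum_sub_mul_indicator_eq g N hh hx]
  have hxh : 0 ≤ x / h := div_nonneg hx hh.le
  have hlow : ⌊x / h⌋₊ * h ≤ x := (le_div_iff₀ hh).mp (Nat.floor_le hxh)
  rcases lt_or_ge ⌊x / h⌋₊ N with hlt | hge
  · have hup : x < (⌊x / h⌋₊ + 1) * h := (div_lt_iff₀ hh).mp (Nat.lt_floor_add_one _)
    have hle : (⌊x / h⌋₊ + 1 : ℝ) * h ≤ R :=
      hNh ▸ mul_le_mul_of_nonneg_right (by exact_mod_cast hlt) hh.le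
    rw [min_eq_right hlt.le, show g ⌊x / h⌋₊ = ϑ (⌊x / h⌋₊ * h) from if_pos hlt,
      ← dist_eq_norm]
    refine (hϑδ x ⟨hx, ?_⟩ _ ⟨by positivity, ?_⟩ ?_).le
    · linarith
    · linarith
    · rw [Real.dist_eq, abs_of_nonneg (by linarith)]; linarith
  · have hge' : R ≤ ⌊x / h⌋₊ * h :=
      hNh ▸ mul_le_mul_of_nonneg_right (by exact_mod_cast hge) hh.le
    rw [min_eq_left hge, show g N = L from if_neg (lt_irrefl N), ← dist_eq_norm]
    exact hR₀ x (by linarith [le_max_left R₀ 1])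

theorem LinearIsometryEquiv.norm_conjContinuousAlgEquiv_le {𝕜 E E' : Type*}
    [NontriviallyNormedField 𝕜] [NormedAddCommGroup E] [NormedSpace 𝕜 E]
    [NormedAddCommGroup E'] [NormedSpace 𝕜 E'] (e : E ≃ₗᵢ[𝕜] E') (X : E →L[𝕜] E) :
    ‖e.toContinuousLinearEquiv.conjContinuousAlgEquiv X‖ ≤ ‖X‖ :=
  ContinuousLinearMap.opNorm_le_bound _ (norm_nonneg X) fun f => by
    simpa using X.le_opNorm (e.symm f)

section FourierConjugation

variable {F : L2R ≃ₗᵢ[ℂ] L2R} {Ma : L2R →L[ℂ] L2R} {a : ℝ → ℂ}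

-- `Φ X = F⁻¹ ∘ X ∘ F`
local notation "Φ" => F.symm.toContinuousLinearEquiv.conjContinuousAlgEquiv

theorem conj_translate_mem_compactCommutant (hF : IsFourierL2 F) (hMa : IsMulOperator Ma a)
    {M : L2R →L[ℂ] L2R} (hM : Φ M ∈ compactCommutant Ma) (s : ℝ) :
    Φ (Lp.translate (-s) * M * Lp.translate s) ∈ compactCommutant Ma := by
  have hmod (t : ℝ) : Φ (Lp.translate (-t)) ∈ compactCommutant Ma :=
    (hMa.commute (hF.isMulOperator_conj_translate t)).mem_compactCommutant
  rw [map_mul, map_mul]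
  refine mul_mem (mul_mem (hmod s) hM) ?_
  simpa using hmod (-s)

theorem exists_isMulOperator_translate_sum_mem (hF : IsFourierL2 F) (hMa : IsMulOperator Ma a)
    {M : L2R →L[ℂ] L2R} {χ : ℝ → ℂ} (hM : IsMulOperator M χ) (hMc : Φ M ∈ compactCommutant Ma)
    (c : ℂ) (N : ℕ) (s : ℕ → ℝ) (b : ℕ → ℂ) :
    ∃ S : L2R →L[ℂ] L2R,
      IsMulOperator S (fun x => c + ∑ k ∈ Finset.range N, b k * χ (x - s k)) ∧
        Φ S ∈ compactCommutant Ma := by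
  refine ⟨c • 1 + ∑ k ∈ Finset.range N, b k • (Lp.translate (-s k) * M * Lp.translate (s k)),
    ?_, ?_⟩
  · have hsymbol : (fun x => c + ∑ k ∈ Finset.range N, b k * χ (x - s k)) =
        c • 1 + ∑ k ∈ Finset.range N, b k • fun x => χ (x - s k) := by
      funext x
      simp [Finset.sum_apply]
    rw [hsymbol]
    exact (IsMulOperator.one.smul c).add (IsMulOperator.sum _ fun k _ =>
      (hM.translate_conj (s k)).smul (b k))
  · rw [map_add, map_smul, map_one, map_sum]
    refine add_mem (Subalgebra.smul_mem _ (one_mem _) c) (sum_mem fun k _ => ?_)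
    rw [map_smul]
    exact Subalgebra.smul_mem _ (conj_translate_mem_compactCommutant hF hMa hMc (s k)) (b k)

theorem conj_compress_mem_compactCommutant (hF : IsFourierL2 F) (hMa : IsMulOperator Ma a)
    {Mχ : L2R →L[ℂ] L2R} (hMχ : IsMulOperator Mχ ((Ici (0 : ℝ)).indicator fun _ => 1))
    (hQC : Φ Mχ ∈ compactCommutant Ma) {Mϑ : L2R →L[ℂ] L2R} {ϑ : ℝ → ℂ}
    (hMϑ : IsMulOperator Mϑ ϑ) (hϑc : ContinuousOn ϑ (Ici 0)) {L : ℂ}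
    (hϑlim : Tendsto ϑ atTop (𝓝 L)) :
    Φ Mχ * Φ Mϑ * Φ Mχ ∈ compactCommutant (Φ Mχ * Ma * Φ Mχ) := by
  have hχχ : Mχ * Mχ = Mχ := by
    refine (hMχ.mul hMχ).ext ?_
    convert hMχ using 1
    funext x
    by_cases hx : x ∈ Ici (0 : ℝ) <;> simp [hx]
  have hPP : Φ Mχ * Φ Mχ = Φ Mχ := by rw [← map_mul, hχχ]
  refine (isClosed_compactCommutant _).closure_subset (Metric.mem_closure_iff.mpr fun ε hε => ?_)
  obtain ⟨c, N, s, b, happrox⟩ := exists_sum_indicator_approx hϑc hϑlim (half_pos hε)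
  obtain ⟨S, hS, hSc⟩ := exists_isMulOperator_translate_sum_mem hF hMa hMχ hQC c N s b
  refine ⟨Φ Mχ * Φ S * Φ Mχ,
    mul_mul_mem_compactCommutant_mul_mul hPP ((hMχ.commute hS).map Φ) hSc, ?_⟩
  have hdiff : Φ Mχ * Φ Mϑ * Φ Mχ - Φ Mχ * Φ S * Φ Mχ = Φ (Mχ * (Mϑ - S) * Mχ) := by
    simp only [map_mul, map_sub]
    noncomm_ring
  rw [dist_eq_norm, hdiff]
  refine ((F.symm.norm_conjContinuousAlgEquiv_le _).trans ?_).trans_lt (half_lt_self hε)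
  refine ((hMχ.mul (hMϑ.sub hS)).mul hMχ).norm_le (half_pos hε).le (.of_forall fun x => ?_)
  by_cases hx : 0 ≤ x
  · simpa [hx] using happrox x hx
  · simp [hx, (half_pos hε).le]

end FourierConjugation

theorem stmt7_general (F : L2R ≃ₗᵢ[ℂ] L2R) (hF : IsFourierL2 F)
    (Mχ : L2R →L[ℂ] L2R)
    (hMχ : ∀ f : L2R, (Mχ f : ℝ → ℂ) =ᵐ[volume]
      fun x => Set.indicator (Set.Ici (0 : ℝ)) (fun _ => (1 : ℂ)) x * f x)
    (a : ℝ → ℂ)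
    (Ma : L2R →L[ℂ] L2R)
    (hMa : ∀ f : L2R, (Ma f : ℝ → ℂ) =ᵐ[volume] fun x => a x * f x)
    (ϑ : ℝ → ℂ) (hϑc : Continuous ϑ) (L : ℂ) (hϑlim : Tendsto ϑ atTop (nhds L))
    (Mϑ : L2R →L[ℂ] L2R)
    (hMϑ : ∀ f : L2R, (Mϑ f : ℝ → ℂ) =ᵐ[volume] fun t => ϑ t * f t)
    -- `P` is the Riesz projection, `D` the Fourier multiplier `D_ϑ`:
    (P D : L2R →L[ℂ] L2R)
    (hP : P = F.symm.toContinuousLinearEquiv.toContinuousLinearMap ∘L Mχ ∘L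
      F.toContinuousLinearEquiv.toContinuousLinearMap)
    (hD : D = F.symm.toContinuousLinearEquiv.toContinuousLinearMap ∘L Mϑ ∘L
      F.toContinuousLinearEquiv.toContinuousLinearMap)
    -- `a ∈ QC(ℝ)`: the commutator of the Riesz projection with `M_a` is compact:
    (hQC : IsCompactOperator ⇑(P ∘L Ma - Ma ∘L P)) :
    IsCompactOperator
      ⇑((P ∘L Ma ∘L P) ∘L (P ∘L D ∘L P) - (P ∘L D ∘L P) ∘L (P ∘L Ma ∘L P)) := by
  have hPΦ : P = F.symm.toContinuousLinearEquiv.conjContinuousAlgEquiv Mχ := hP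
  have hDΦ : D = F.symm.toContinuousLinearEquiv.conjContinuousAlgEquiv Mϑ := hD
  have hPMa : P ∈ compactCommutant Ma := mem_compactCommutant_comm.mp hQC
  rw [hPΦ] at hPMa
  have key := conj_compress_mem_compactCommutant hF hMa hMχ hPMa hMϑ hϑc.continuousOn hϑlim
  rw [← hPΦ, ← hDΦ, mem_compactCommutant] at key
  simpa only [ContinuousLinearMap.mul_def, ContinuousLinearMap.comp_assoc] using key

/-- For `a ∈ QC(ℝ)` (equivalently, `[P, M_a]` compact) and
`ϑ ∈ C([0,∞])`, the commutator `[T_a, D_ϑ]` is compact on `H²(ℍ)`.  Here `T_a = P M_a P`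
and `D_ϑ = F⁻¹ M_ϑ F` compressed by `P`, acting on `L²(ℝ)` as extensions by zero of the
corresponding operators on `H² = ran P`. -/
theorem stmt7 (F : L2R ≃ₗᵢ[ℂ] L2R) (hF : IsFourierL2 F)
    (Mχ : L2R →L[ℂ] L2R)
    (hMχ : ∀ f : L2R, (Mχ f : ℝ → ℂ) =ᵐ[volume]
      fun x => Set.indicator (Set.Ici (0 : ℝ)) (fun _ => (1 : ℂ)) x * f x)
    (a : ℝ → ℂ) (ha : Measurable a) (hab : ∃ C : ℝ, ∀ x, ‖a x‖ ≤ C)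
    (Ma : L2R →L[ℂ] L2R)
    (hMa : ∀ f : L2R, (Ma f : ℝ → ℂ) =ᵐ[volume] fun x => a x * f x)
    (ϑ : ℝ → ℂ) (hϑc : Continuous ϑ) (L : ℂ) (hϑlim : Tendsto ϑ atTop (nhds L))
    (Mϑ : L2R →L[ℂ] L2R)
    (hMϑ : ∀ f : L2R, (Mϑ f : ℝ → ℂ) =ᵐ[volume] fun t => ϑ t * f t)
    -- `P` is the Riesz projection, `D` the Fourier multiplier `D_ϑ`:
    (P D : L2R →L[ℂ] L2R)
    (hP : P = F.symm.toContinuousLinearEquiv.toContinuousLinearMap ∘L Mχ ∘L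
      F.toContinuousLinearEquiv.toContinuousLinearMap)
    (hD : D = F.symm.toContinuousLinearEquiv.toContinuousLinearMap ∘L Mϑ ∘L
      F.toContinuousLinearEquiv.toContinuousLinearMap)
    -- `a ∈ QC(ℝ)`: the commutator of the Riesz projection with `M_a` is compact:
    (hQC : IsCompactOperator ⇑(P ∘L Ma - Ma ∘L P)) :
    IsCompactOperator
      ⇑((P ∘L Ma ∘L P) ∘L (P ∘L D ∘L P) - (P ∘L D ∘L P) ∘L (P ∘L Ma ∘L P)) :=
  stmt7_general F hF Mχ hMχ a Ma hMa ϑ hϑc L hϑlim Mϑ hMϑ P D hP hD hQC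


end
end
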